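/- arXiv:1001.3557 — 4 statements merged into one kernel-verified Lean document; each statement's English description precedes it below -/
import Mathlib

section
/- Let α : [0,T] → (0,∞) be measurable with α² integrable, define A(t) = ∫_0^t α(u)² du, and let r > 0. Then for any measurable g : [0,T] → ℝ with g²/α² integrable and any s ∈ [0,T]: (∫_s^T g(u) du)² ≤ (1/r) e^{-r A(s)} ∫_s^T e^{r A(u)} g(u)²/α(u)² du. -/
open MeasureTheory Set Real intervalIntegral
open scoped Interval

/-!
Since `g² = v · w` with `v = e^{-rA} α²` and `w = e^{rA} g² / α²`, Cauchy–Schwarz bounds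
`(∫ₛᵀ g)²` by `(∫ₛᵀ v) · ∫ₛᵀ w`. By Lebesgue differentiation `A' = α²` a.e., so `v` is a.e. the
derivative of the monotone function `-e^{-rA} / r`; the integral of the a.e. derivative of a
monotone function is at most its increment, which gives `∫ₛᵀ v ≤ e^{-rA(s)} / r` without having
to know that `e^{-rA}` is absolutely continuous.
-/

theorem quadratic_nonneg_of_sq_le_mul {a b c : ℝ} (ha : 0 ≤ a) (hc : 0 ≤ c) (hb : b ^ 2 ≤ a * c)
    (t : ℝ) : 0 ≤ a * (t * t) + -2 * b * t + c := by
  rcases ha.eq_or_lt with rfl | ha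
  · have hb : b = 0 := by nlinarith [sq_nonneg b]
    simpa [hb] using hc
  · refine nonneg_of_mul_nonneg_right ?_ ha
    nlinarith [sq_nonneg (a * t - b)]

theorem sq_integral_le_integral_mul_integral {X : Type*} [MeasurableSpace X] {μ : Measure X}
    {g v w : X → ℝ} (hv : Integrable v μ) (hw : Integrable w μ)
    (hv0 : 0 ≤ᵐ[μ] v) (hw0 : 0 ≤ᵐ[μ] w) (hgvw : ∀ᵐ x ∂μ, g x ^ 2 ≤ v x * w x) :
    (∫ x, g x ∂μ) ^ 2 ≤ (∫ x, v x ∂μ) * ∫ x, w x ∂μ := by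
  by_cases hg : Integrable g μ
  · have hquad : ∀ t : ℝ,
        0 ≤ (∫ x, v x ∂μ) * (t * t) + -2 * (∫ x, g x ∂μ) * t + ∫ x, w x ∂μ := by
      intro t
      have hint : 0 ≤ ∫ x, (v x * (t * t) + -2 * g x * t + w x) ∂μ := by
        refine integral_nonneg_of_ae ?_
        filter_upwards [hv0, hw0, hgvw] with x hvx hwx hx
        exact quadratic_nonneg_of_sq_le_mul hvx hwx hx t
      rwa [integral_add ?_ hw, integral_add (hv.mul_const _) ((hg.const_mul _).mul_const _),
        MeasureTheory.integral_mul_const, MeasureTheory.integral_mul_const,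
        MeasureTheory.integral_const_mul] at hint
      exact (hv.mul_const _).add ((hg.const_mul _).mul_const _)
    have := discrim_le_zero hquad
    rw [discrim] at this
    linarith
  · rw [integral_undef hg, zero_pow two_ne_zero]
    exact mul_nonneg (integral_nonneg_of_ae hv0) (integral_nonneg_of_ae hw0)

theorem integral_exp_neg_mul_primitive_mul_le {f : ℝ → ℝ} {a s b r : ℝ} (hr : 0 < r)
    (hf : IntervalIntegrable f volume a b) (hf0 : ∀ x ∈ Icc a b, 0 ≤ f x)
    (has : a ≤ s) (hsb : s ≤ b) :
    ∫ u in s..b, exp (-r * ∫ v in a..u, f v) * f u ≤ (1 / r) * exp (-r * ∫ v in a..s, f v) := by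
  set A := fun u => ∫ v in a..u, f v
  set F := fun u => -(exp (-(r * A u)) / r)
  have hAmono : MonotoneOn A (Icc s b) := by
    intro x hx y hy hxy
    have hyb : Icc a y ⊆ Icc a b := Icc_subset_Icc le_rfl hy.2
    refine integral_mono_interval le_rfl (has.trans hx.1) hxy ?_ (hf.mono_set ?_)
    · filter_upwards [ae_restrict_mem measurableSet_Ioc] with u hu
      exact hf0 u (hyb (Ioc_subset_Icc_self hu))
    · rwa [uIcc_of_le (has.trans (hx.1.trans hxy)), uIcc_of_le (has.trans hsb)]
  have hFmono : MonotoneOn F (uIcc s b) := by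
    rw [uIcc_of_le hsb]
    intro x hx y hy hxy
    have := hAmono hx hy hxy
    simp only [F]
    gcongr
  have hderiv : ∀ᵐ x, x ∈ Ι s b → deriv F x = exp (-r * A x) * f x := by
    filter_upwards [hf.ae_hasDerivAt_integral] with x hx hxsb
    have hxab : x ∈ [[a, b]] := by
      rw [uIcc_of_le (has.trans hsb)]
      exact Icc_subset_Icc has le_rfl (Ioc_subset_Icc_self (uIoc_of_le hsb ▸ hxsb))
    have hA := hx hxab a left_mem_uIcc
    refine ((hA.const_mul r).neg.exp.div_const r).neg.deriv.trans ?_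
    simp only [A, Pi.neg_apply]
    field_simp
  have hF := hFmono.intervalIntegral_deriv_mem_uIcc
  rw [uIcc_of_le (sub_nonneg.2 (hFmono left_mem_uIcc right_mem_uIcc hsb))] at hF
  calc ∫ u in s..b, exp (-r * A u) * f u = ∫ u in s..b, deriv F u :=
        (integral_congr_ae hderiv).symm
    _ ≤ F b - F s := hF.2
    _ ≤ (1 / r) * exp (-r * A s) := by
        simp only [F, neg_mul, one_div_mul_eq_div]
        have : 0 < exp (-(r * A b)) / r := by positivity
        linarith

theorem stmt3_general (T r : ℝ) (hr : 0 < r) (α g : ℝ → ℝ)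
    (hαpos : ∀ u, 0 < α u)
    (hα2 : IntegrableOn (fun u => (α u) ^ 2) (Set.Icc 0 T))
    (A : ℝ → ℝ) (hA : ∀ t, A t = ∫ u in (0:ℝ)..t, (α u) ^ 2)
    (hgi : IntegrableOn
      (fun u => Real.exp (r * A u) * (g u) ^ 2 / (α u) ^ 2) (Set.Icc 0 T))
    (s : ℝ) (hs : s ∈ Set.Icc 0 T) :
    (∫ u in s..T, g u) ^ 2 ≤
      (1 / r) * Real.exp (-r * A s) *
        ∫ u in s..T, Real.exp (r * A u) * (g u) ^ 2 / (α u) ^ 2 := by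
  obtain ⟨hs0, hsT⟩ := hs
  have hα2i : IntervalIntegrable (fun u => α u ^ 2) volume 0 T :=
    (intervalIntegrable_iff_integrableOn_Icc_of_le (hs0.trans hsT)).2 hα2
  have hsub : [[s, T]] ⊆ [[0, T]] :=
    uIcc_subset_uIcc ⟨by simp [hs0], by simp [hsT]⟩ right_mem_uIcc
  have hAcont : ContinuousOn A [[s, T]] :=
    ((continuousOn_primitive_interval' hα2i left_mem_uIcc).congr fun t _ => hA t).mono hsub
  have hv : IntervalIntegrable (fun u => exp (-r * A u) * α u ^ 2) volume s T :=
    (hα2i.mono_set hsub).continuousOn_mul (by fun_prop)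
  have hw : IntervalIntegrable (fun u => exp (r * A u) * g u ^ 2 / α u ^ 2) volume s T :=
    (intervalIntegrable_iff_integrableOn_Icc_of_le hsT).2
      (hgi.mono_set (Icc_subset_Icc hs0 le_rfl))
  have hg_sq : ∀ u,
      g u ^ 2 = exp (-r * A u) * α u ^ 2 * (exp (r * A u) * g u ^ 2 / α u ^ 2) := by
    intro u
    have := (hαpos u).ne'
    field_simp
    rw [mul_assoc, ← exp_add]
    simp
  have hkey : ∫ u in s..T, exp (-r * A u) * α u ^ 2 ≤ (1 / r) * exp (-r * A s) := by
    simpa only [← hA] using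
      integral_exp_neg_mul_primitive_mul_le hr hα2i (fun u _ => sq_nonneg (α u)) hs0 hsT
  simp only [intervalIntegral.integral_of_le hsT] at hkey ⊢
  calc (∫ u in Ioc s T, g u) ^ 2
      ≤ (∫ u in Ioc s T, exp (-r * A u) * α u ^ 2) *
          ∫ u in Ioc s T, exp (r * A u) * g u ^ 2 / α u ^ 2 :=
        sq_integral_le_integral_mul_integral hv.1 hw.1 (ae_of_all _ fun u => by positivity)
          (ae_of_all _ fun u => by positivity) (ae_of_all _ fun u => (hg_sq u).le)
    _ ≤ _ := by gcongr

theorem stmt3 (T r : ℝ) (hT : 0 ≤ T) (hr : 0 < r) (α g : ℝ → ℝ)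
    (hα : Measurable α) (hαpos : ∀ u, 0 < α u)
    (hα2 : IntegrableOn (fun u => (α u) ^ 2) (Set.Icc 0 T))
    (A : ℝ → ℝ) (hA : ∀ t, A t = ∫ u in (0:ℝ)..t, (α u) ^ 2)
    (hg : Measurable g)
    (hgi : IntegrableOn
      (fun u => Real.exp (r * A u) * (g u) ^ 2 / (α u) ^ 2) (Set.Icc 0 T))
    (s : ℝ) (hs : s ∈ Set.Icc 0 T) :
    (∫ u in s..T, g u) ^ 2 ≤
      (1 / r) * Real.exp (-r * A s) *
        ∫ u in s..T, Real.exp (r * A u) * (g u) ^ 2 / (α u) ^ 2 :=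
  stmt3_general T r hr α g hαpos hα2 A hA hgi s hs
end

section
/- Let α : [0,T] → [1,∞) be measurable, 1 < p < 2, define A*(t) = ∫_0^t α(u)^{2p/(2-p)} du, and let τ > 0. Then for any measurable g : [0,T] → ℝ and any r ∈ [0,T]: (∫_r^T |g(s)|^p ds)^{2/p} ≤ ((2-p)/(2τ))^{(2-p)/p} e^{-2τ A*(r)/p} ∫_r^T e^{2τ A*(s)/p} g(s)²/α(s)² ds. -/
/-!
Hölder's inequality with exponents `2 / (2 - p)` and `2 / p`, applied to
`|g| ^ p = (e^{-τ A*} α ^ p) · (e^{τ A*} |g| ^ p / α ^ p)`, bounds `(∫_r^T |g| ^ p) ^ (2 / p)` by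
`(∫_r^T e^{-c A*} α ^ (2p/(2-p))) ^ ((2 - p) / p)` times the weighted integral, where
`c = 2τ / (2 - p)`. As a primitive of an integrable function, `A*` is absolutely continuous with
derivative `α ^ (2p/(2-p))` almost everywhere, so the first integral is that of the derivative of
`-e^{-c A*} / c`, hence at most `e^{-c A*(r)} / c`.
-/

open MeasureTheory Set
open scoped NNReal

theorem LipschitzOnWith.comp_absolutelyContinuousOnInterval {X Y : Type*} [PseudoMetricSpace X]
    [PseudoMetricSpace Y] {g : X → Y} {K : ℝ≥0} {s : Set X} {f : ℝ → X} {a b : ℝ}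
    (hg : LipschitzOnWith K g s) (hfs : MapsTo f (uIcc a b) s)
    (hf : AbsolutelyContinuousOnInterval f a b) :
    AbsolutelyContinuousOnInterval (g ∘ f) a b := by
  rw [absolutelyContinuousOnInterval_iff] at hf ⊢
  intro ε hε
  obtain ⟨δ, hδ, hfδ⟩ := hf (ε / (K + 1)) (by positivity)
  refine ⟨δ, hδ, fun E hE hEδ => ?_⟩
  calc ∑ i ∈ Finset.range E.1, dist (g (f (E.2 i).1)) (g (f (E.2 i).2))
      ≤ ∑ i ∈ Finset.range E.1, K * dist (f (E.2 i).1) (f (E.2 i).2) :=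
        Finset.sum_le_sum fun i hi => hg.dist_le_mul _ (hfs (hE.1 i hi).1) _ (hfs (hE.1 i hi).2)
    _ = K * ∑ i ∈ Finset.range E.1, dist (f (E.2 i).1) (f (E.2 i).2) := (Finset.mul_sum ..).symm
    _ ≤ K * (ε / (K + 1)) := by gcongr; exact (hfδ E hE hEδ).le
    _ < ε := by
      rw [mul_div_assoc', div_lt_iff₀ (by positivity)]
      nlinarith

theorem ContDiff.comp_absolutelyContinuousOnInterval {E F : Type*} [NormedAddCommGroup E]
    [NormedSpace ℝ E] [ProperSpace E] [NormedAddCommGroup F] [NormedSpace ℝ F]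
    {G : E → F} (hG : ContDiff ℝ 1 G) {f : ℝ → E} {a b : ℝ}
    (hf : AbsolutelyContinuousOnInterval f a b) :
    AbsolutelyContinuousOnInterval (G ∘ f) a b := by
  obtain ⟨R, hR⟩ :=
    (isCompact_uIcc.image_of_continuousOn hf.continuousOn).isBounded.subset_closedBall 0
  obtain ⟨K, hK⟩ := hG.contDiffOn.exists_lipschitzOnWith one_ne_zero (convex_closedBall 0 R)
    (isCompact_closedBall 0 R)
  exact hK.comp_absolutelyContinuousOnInterval (fun x hx => hR (mem_image_of_mem f hx)) hf

theorem AbsolutelyContinuousOnInterval.integral_comp_mul_deriv {G G' A A' : ℝ → ℝ} {a b : ℝ}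
    (hG : ∀ x, HasDerivAt G (G' x) x) (hG' : Continuous G')
    (hA : AbsolutelyContinuousOnInterval A a b)
    (hA' : ∀ᵐ x, x ∈ uIcc a b → HasDerivAt A (A' x) x) :
    ∫ x in a..b, G' (A x) * A' x = G (A b) - G (A a) := by
  have hGC : ContDiff ℝ 1 G := by
    rw [contDiff_one_iff_deriv]
    refine ⟨fun x => (hG x).differentiableAt, ?_⟩
    rwa [show deriv G = G' from funext fun x => (hG x).deriv]
  rw [show G (A b) - G (A a) = (G ∘ A) b - (G ∘ A) a from rfl,
    ← (hGC.comp_absolutelyContinuousOnInterval hA).integral_deriv_eq_sub]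
  refine intervalIntegral.integral_congr_ae ?_
  filter_upwards [hA'] with x hx hxI
  exact (((hG _).comp x (hx (uIoc_subset_uIcc hxI))).deriv).symm

theorem AbsolutelyContinuousOnInterval.integral_exp_neg_mul_mul_deriv_le {A A' : ℝ → ℝ}
    {a b c : ℝ} (hc : 0 < c) (hA : AbsolutelyContinuousOnInterval A a b)
    (hA' : ∀ᵐ x, x ∈ uIcc a b → HasDerivAt A (A' x) x) :
    ∫ x in a..b, Real.exp (-(c * A x)) * A' x ≤ Real.exp (-(c * A a)) / c := by
  have hG : ∀ y, HasDerivAt (fun y => -Real.exp (-(c * y)) / c) (Real.exp (-(c * y))) y := by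
    intro y
    have hlin : HasDerivAt (fun y => -(c * y)) (-c) y := by
      simpa using ((hasDerivAt_id' y).const_mul c).fun_neg
    exact (hlin.exp.fun_neg.div_const c).congr_deriv (by field_simp)
  rw [hA.integral_comp_mul_deriv hG (by fun_prop) hA', le_div_iff₀ hc]
  field_simp
  linarith [Real.exp_pos (-(c * A b))]

section

variable {Ω : Type*} [MeasurableSpace Ω] {μ : Measure Ω}

theorem memLp_ofReal_of_integrable_rpow {f : Ω → ℝ} {P : ℝ} (hf : 0 ≤ f) (hP : 0 < P)
    (hfP : Integrable (fun x => f x ^ P) μ) : MemLp f (ENNReal.ofReal P) μ := by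
  have hPne : ENNReal.ofReal P ≠ 0 := by simpa using hP
  have hfm : AEStronglyMeasurable f μ := by
    have := (hfP.aemeasurable.pow_const P⁻¹).aestronglyMeasurable
    simpa only [Real.rpow_rpow_inv (hf _) hP.ne'] using this
  rw [← memLp_norm_rpow_iff hfm hPne ENNReal.ofReal_ne_top,
    ENNReal.div_self hPne ENNReal.ofReal_ne_top, memLp_one_iff_integrable]
  refine hfP.congr (Filter.Eventually.of_forall fun x => ?_)
  simp [ENNReal.toReal_ofReal hP.le, abs_of_nonneg (hf x)]

theorem integral_mul_le_of_integrable_rpow {P Q : ℝ} (hPQ : P.HolderConjugate Q) {f g : Ω → ℝ}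
    (hf : 0 ≤ f) (hg : 0 ≤ g) (hfP : Integrable (fun x => f x ^ P) μ)
    (hgQ : Integrable (fun x => g x ^ Q) μ) :
    ∫ x, f x * g x ∂μ ≤ (∫ x, f x ^ P ∂μ) ^ (1 / P) * (∫ x, g x ^ Q ∂μ) ^ (1 / Q) :=
  integral_mul_le_Lp_mul_Lq_of_nonneg hPQ (.of_forall hf) (.of_forall hg)
    (memLp_ofReal_of_integrable_rpow hf hPQ.pos hfP)
    (memLp_ofReal_of_integrable_rpow hg hPQ.symm.pos hgQ)

theorem integral_rpow_abs_rpow_le {p : ℝ} (hp0 : 0 < p) (hp2 : p < 2) {w g : Ω → ℝ}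
    (hw : ∀ x, 0 < w x) (hwi : Integrable (fun x => w x ^ (2 / (2 - p))) μ)
    (hgi : Integrable (fun x => g x ^ 2 / w x ^ (2 / p)) μ) :
    (∫ x, |g x| ^ p ∂μ) ^ (2 / p) ≤
      (∫ x, w x ^ (2 / (2 - p)) ∂μ) ^ ((2 - p) / p) * ∫ x, g x ^ 2 / w x ^ (2 / p) ∂μ := by
  have hPQ : (2 / (2 - p)).HolderConjugate (2 / p) := by
    rw [Real.holderConjugate_iff]
    constructor
    · rw [lt_div_iff₀ (by linarith)]; linarith
    · field_simp; ring
  have hv : ∀ x, (|g x| ^ p / w x) ^ (2 / p) = g x ^ 2 / w x ^ (2 / p) := by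
    intro x
    rw [Real.div_rpow (by positivity) (hw x).le, ← Real.rpow_mul (abs_nonneg _),
      mul_div_cancel₀ _ hp0.ne', Real.rpow_two, sq_abs]
  have hholder := integral_mul_le_of_integrable_rpow hPQ (f := w)
    (g := fun x => |g x| ^ p / w x) (fun x => (hw x).le)
    (fun x => div_nonneg (by positivity) (hw x).le) hwi (by simpa only [hv] using hgi)
  simp only [hv, mul_div_cancel₀ _ (hw _).ne'] at hholder
  have hJ : 0 ≤ ∫ x, w x ^ (2 / (2 - p)) ∂μ := integral_nonneg fun x =>
    Real.rpow_nonneg (hw x).le _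
  have hK : 0 ≤ ∫ x, g x ^ 2 / w x ^ (2 / p) ∂μ := integral_nonneg fun x =>
    div_nonneg (sq_nonneg _) (Real.rpow_nonneg (hw x).le _)
  calc (∫ x, |g x| ^ p ∂μ) ^ (2 / p)
      ≤ ((∫ x, w x ^ (2 / (2 - p)) ∂μ) ^ (1 / (2 / (2 - p))) *
          (∫ x, g x ^ 2 / w x ^ (2 / p) ∂μ) ^ (1 / (2 / p))) ^ (2 / p) :=
        Real.rpow_le_rpow (integral_nonneg fun x => by positivity) hholder (by positivity)
    _ = _ := by
      rw [Real.mul_rpow (by positivity) (by positivity), ← Real.rpow_mul hJ, ← Real.rpow_mul hK,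
        one_div_mul_cancel (by positivity), Real.rpow_one]
      congr 2
      field_simp

theorem Real.exp_mul_rpow_rpow (x : ℝ) {y : ℝ} (hy : 0 ≤ y) (p q : ℝ) :
    (Real.exp x * y ^ p) ^ q = Real.exp (x * q) * y ^ (p * q) := by
  rw [Real.mul_rpow (Real.exp_pos x).le (Real.rpow_nonneg hy p), ← Real.exp_mul,
    ← Real.rpow_mul hy]

theorem integral_rpow_abs_rpow_le_of_exp_weight {p : ℝ} (hp0 : 0 < p) (hp2 : p < 2) (τ : ℝ)
    {A α g : Ω → ℝ} (hα : ∀ x, 0 < α x)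
    (hαi : Integrable (fun x => Real.exp (-(2 * τ / (2 - p) * A x)) * α x ^ (2 * p / (2 - p))) μ)
    (hgi : Integrable (fun x => Real.exp (2 * τ * A x / p) * g x ^ 2 / α x ^ 2) μ) :
    (∫ x, |g x| ^ p ∂μ) ^ (2 / p) ≤
      (∫ x, Real.exp (-(2 * τ / (2 - p) * A x)) * α x ^ (2 * p / (2 - p)) ∂μ) ^ ((2 - p) / p) *
        ∫ x, Real.exp (2 * τ * A x / p) * g x ^ 2 / α x ^ 2 ∂μ := by
  set w : Ω → ℝ := fun x => Real.exp (-(τ * A x)) * α x ^ p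
  have hw : ∀ x, 0 < w x := fun x => mul_pos (Real.exp_pos _) (Real.rpow_pos_of_pos (hα x) p)
  have hwP : ∀ x, w x ^ (2 / (2 - p)) =
      Real.exp (-(2 * τ / (2 - p) * A x)) * α x ^ (2 * p / (2 - p)) := by
    intro x
    rw [Real.exp_mul_rpow_rpow _ (hα x).le]
    congr 2 <;> ring
  have hwQ : ∀ x, g x ^ 2 / w x ^ (2 / p) = Real.exp (2 * τ * A x / p) * g x ^ 2 / α x ^ 2 := by
    intro x
    rw [Real.exp_mul_rpow_rpow _ (hα x).le, mul_div_cancel₀ _ hp0.ne', Real.rpow_two,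
      show -(τ * A x) * (2 / p) = -(2 * τ * A x / p) by ring, Real.exp_neg]
    field_simp
  simp only [← hwP, ← hwQ] at hαi hgi ⊢
  exact integral_rpow_abs_rpow_le hp0 hp2 hw hαi hgi

end

theorem IntervalIntegrable.exp_neg_mul_primitive_mul {h : ℝ → ℝ} {a b : ℝ}
    (hh : IntervalIntegrable h volume a b) (c : ℝ) :
    IntervalIntegrable (fun x => Real.exp (-(c * ∫ t in a..x, h t)) * h x) volume a b := by
  have hA := (hh.absolutelyContinuousOnInterval_intervalIntegral left_mem_uIcc).continuousOn
  exact hh.continuousOn_mul (by fun_prop)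

theorem IntervalIntegrable.integral_exp_neg_mul_primitive_mul_le {h : ℝ → ℝ} {a b c : ℝ}
    (hh : IntervalIntegrable h volume a b) (hc : 0 < c) {r : ℝ} (hr : r ∈ uIcc a b) :
    ∫ x in r..b, Real.exp (-(c * ∫ t in a..x, h t)) * h x ≤
      Real.exp (-(c * ∫ t in a..r, h t)) / c := by
  have hsub : uIcc r b ⊆ uIcc a b := uIcc_subset_uIcc hr right_mem_uIcc
  refine AbsolutelyContinuousOnInterval.integral_exp_neg_mul_mul_deriv_le hc
    ((hh.absolutelyContinuousOnInterval_intervalIntegral left_mem_uIcc).mono hsub) ?_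
  filter_upwards [hh.ae_hasDerivAt_integral] with x hx hxI
  exact hx (hsub hxI) a left_mem_uIcc

theorem stmt5_general (T p τ : ℝ) (hp1 : 1 < p) (hp2 : p < 2) (hτ : 0 < τ)
    (α g : ℝ → ℝ) (hα1 : ∀ u, 1 ≤ α u)
    (hαi : IntegrableOn (fun u => α u ^ (2 * p / (2 - p))) (Set.Icc 0 T))
    (Astar : ℝ → ℝ) (hAstar : ∀ t, Astar t = ∫ u in (0:ℝ)..t, α u ^ (2 * p / (2 - p)))
    (hgi : IntegrableOn
      (fun s => Real.exp (2 * τ * Astar s / p) * (g s) ^ 2 / (α s) ^ 2) (Set.Icc 0 T))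
    (r : ℝ) (hr : r ∈ Set.Icc 0 T) :
    (∫ s in r..T, |g s| ^ p) ^ (2 / p) ≤
      ((2 - p) / (2 * τ)) ^ ((2 - p) / p) * Real.exp (-(2 * τ * Astar r / p)) *
        ∫ s in r..T, Real.exp (2 * τ * Astar s / p) * (g s) ^ 2 / (α s) ^ 2 := by
  obtain ⟨hr0, hrT⟩ := hr
  have h2p : 0 < 2 - p := by linarith
  have hα0 : ∀ u, 0 < α u := fun u => zero_lt_one.trans_le (hα1 u)
  have hh : IntervalIntegrable (fun u => α u ^ (2 * p / (2 - p))) volume 0 T :=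
    (intervalIntegrable_iff_integrableOn_Ioc_of_le (hr0.trans hrT)).2
      (hαi.mono_set Ioc_subset_Icc_self)
  have hJ := hh.integral_exp_neg_mul_primitive_mul_le (c := 2 * τ / (2 - p)) (by positivity)
    (mem_uIcc_of_le hr0 hrT)
  have hJi := ((hh.exp_neg_mul_primitive_mul (2 * τ / (2 - p))).mono_set
    (uIcc_subset_uIcc_right (mem_uIcc_of_le hr0 hrT))).1
  simp only [← hAstar] at hJ hJi
  rw [intervalIntegral.integral_of_le hrT] at hJ
  rw [intervalIntegral.integral_of_le hrT, intervalIntegral.integral_of_le hrT]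
  refine (integral_rpow_abs_rpow_le_of_exp_weight (μ := volume.restrict (Ioc r T)) (by linarith)
    hp2 τ hα0 hJi
    (hgi.mono_set (Ioc_subset_Icc_self.trans (Icc_subset_Icc_left hr0)))).trans
    (mul_le_mul_of_nonneg_right ?_ (setIntegral_nonneg measurableSet_Ioc fun s _ => by positivity))
  calc _ ≤ (Real.exp (-(2 * τ / (2 - p) * Astar r)) / (2 * τ / (2 - p))) ^ ((2 - p) / p) :=
        Real.rpow_le_rpow (setIntegral_nonneg measurableSet_Ioc fun s _ =>
          mul_nonneg (Real.exp_pos _).le (Real.rpow_nonneg (hα0 s).le _)) hJ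
          (div_nonneg h2p.le (by linarith))
    _ = _ := by
      rw [div_eq_inv_mul, Real.mul_rpow (by positivity) (Real.exp_pos _).le, ← Real.exp_mul]
      congr 2 <;> field_simp

theorem stmt5 (T p τ : ℝ) (hT : 0 ≤ T) (hp1 : 1 < p) (hp2 : p < 2) (hτ : 0 < τ)
    (α g : ℝ → ℝ) (hα : Measurable α) (hα1 : ∀ u, 1 ≤ α u)
    (hαi : IntegrableOn (fun u => α u ^ (2 * p / (2 - p))) (Set.Icc 0 T))
    (Astar : ℝ → ℝ) (hAstar : ∀ t, Astar t = ∫ u in (0:ℝ)..t, α u ^ (2 * p / (2 - p)))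
    (hg : Measurable g)
    (hgp : IntegrableOn (fun s => |g s| ^ p) (Set.Icc 0 T))
    (hgi : IntegrableOn
      (fun s => Real.exp (2 * τ * Astar s / p) * (g s) ^ 2 / (α s) ^ 2) (Set.Icc 0 T))
    (r : ℝ) (hr : r ∈ Set.Icc 0 T) :
    (∫ s in r..T, |g s| ^ p) ^ (2 / p) ≤
      ((2 - p) / (2 * τ)) ^ ((2 - p) / p) * Real.exp (-(2 * τ * Astar r / p)) *
        ∫ s in r..T, Real.exp (2 * τ * Astar s / p) * (g s) ^ 2 / (α s) ^ 2 :=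
  stmt5_general T p τ hp1 hp2 hτ α g hα1 hαi Astar hAstar hgi r hr
end

section
/- Let α : [0,T] → [√δ, ∞) be continuous for some δ > 0, A(t) = ∫_0^t α(u)² du, β > 0, and let g : {(t,s) : 0 ≤ t ≤ s ≤ T} → ℝ be measurable with ∫_0^T ∫_t^T e^{βA(s)} g(t,s)²/α(s)² ds dt < ∞. Then ∫_0^T ∫_t^T e^{βA(s)} (∫_s^T g(t,u) du)² β α(s)² ds dt ≤ (4/β) ∫_0^T ∫_t^T e^{βA(s)} g(t,s)²/α(s)² ds dt. -/
/-!
For fixed `t` this is a weighted Hardy inequality for `f = g t`. Put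
`W s = ∫_s^T e^{βA/2} f² / α²`. Cauchy–Schwarz for `f = (e^{-βA/4} α) (e^{βA/4} f / α)`, together
with `∫_s^T e^{-βA/2} α² ≤ (2/β) e^{-βA(s)/2}` (as `A' = α²`), bounds the left integrand by
`2 e^{βA(s)/2} α(s)² W(s)`. Exchanging the order of integration over `t < s < u ≤ T` produces the
factor `∫_t^u 2 e^{βA/2} α² ≤ (4/β) e^{βA(u)/2}`, which turns `e^{βA/2}` back into `e^{βA}`.
Integrating in `t` concludes; Fubini on the triangle supplies the integrability of the slices.
-/

open MeasureTheory Set Real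
open scoped ENNReal

theorem sq_integral_mul_le_integral_sq_mul_integral_sq {Ω : Type*} [MeasurableSpace Ω]
    {μ : Measure Ω} {f g : Ω → ℝ} (hf : MemLp f 2 μ) (hg : MemLp g 2 μ) :
    (∫ x, f x * g x ∂μ) ^ 2 ≤ (∫ x, f x ^ 2 ∂μ) * ∫ x, g x ^ 2 ∂μ := by
  have h := real_inner_mul_inner_self_le hf.toLp hg.toLp
  simp only [L2.inner_def, RCLike.inner_apply, conj_trivial] at h
  have congr_mul : ∀ {u v u' v' : Ω → ℝ}, u =ᵐ[μ] u' → v =ᵐ[μ] v' →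
      ∫ x, u x * v x ∂μ = ∫ x, u' x * v' x ∂μ := fun hu hv =>
    integral_congr_ae (by filter_upwards [hu, hv] with x hux hvx; rw [hux, hvx])
  rw [congr_mul hg.coeFn_toLp hf.coeFn_toLp, congr_mul hf.coeFn_toLp hf.coeFn_toLp,
    congr_mul hg.coeFn_toLp hg.coeFn_toLp] at h
  simpa only [sq, mul_comm (g _)] using h

theorem lintegral_Ioc_mul_lintegral_Ioc_eq {μ : Measure ℝ} [SFinite μ] {k h : ℝ → ℝ≥0∞}
    (hk : Measurable k) (hh : Measurable h) (a b : ℝ) :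
    ∫⁻ s in Ioc a b, k s * ∫⁻ u in Ioc s b, h u ∂μ ∂μ
      = ∫⁻ u in Ioc a b, (∫⁻ s in Ioo a u, k s ∂μ) * h u ∂μ := by
  set F : ℝ × ℝ → ℝ≥0∞ := {p | a < p.1 ∧ p.1 < p.2 ∧ p.2 ≤ b}.indicator fun p => k p.1 * h p.2
  have hF : Measurable F := by
    refine ((hk.comp measurable_fst).mul (hh.comp measurable_snd)).indicator ?_
    exact (measurableSet_lt measurable_const measurable_fst).inter
      ((measurableSet_lt measurable_fst measurable_snd).inter
        (measurableSet_le measurable_snd measurable_const))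
  have left : ∀ s u, F (s, u) = (Ioc a b).indicator k s * (Ioc s b).indicator h u := by
    intro s u
    simp only [F, indicator_apply, mem_ofPred_eq, mem_Ioc]
    split_ifs <;> first | rfl | (exfalso; grind) | simp
  have right : ∀ s u, F (s, u) = (Ioo a u).indicator k s * (Ioc a b).indicator h u := by
    intro s u
    simp only [F, indicator_apply, mem_ofPred_eq, mem_Ioc, mem_Ioo]
    split_ifs <;> first | rfl | (exfalso; grind) | simp
  calc ∫⁻ s in Ioc a b, k s * ∫⁻ u in Ioc s b, h u ∂μ ∂μ
      = ∫⁻ s, ∫⁻ u, F (s, u) ∂μ ∂μ := by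
        rw [← lintegral_indicator measurableSet_Ioc]
        simp_rw [left, indicator_mul_left, lintegral_const_mul _ (hh.indicator measurableSet_Ioc),
          lintegral_indicator measurableSet_Ioc]
    _ = ∫⁻ u, ∫⁻ s, F (s, u) ∂μ ∂μ := lintegral_lintegral_swap hF.aemeasurable
    _ = _ := by
        rw [← lintegral_indicator measurableSet_Ioc]
        simp_rw [right, indicator_mul_right, lintegral_mul_const _ (hk.indicator measurableSet_Ioo),
          lintegral_indicator measurableSet_Ioo]

theorem ofReal_integral_le_lintegral_ofReal {Ω : Type*} [MeasurableSpace Ω] {μ : Measure Ω}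
    {f : Ω → ℝ} (hf : 0 ≤ᵐ[μ] f) :
    ENNReal.ofReal (∫ x, f x ∂μ) ≤ ∫⁻ x, ENNReal.ofReal (f x) ∂μ := by
  by_cases hfi : Integrable f μ
  · exact (ofReal_integral_eq_lintegral_ofReal hfi hf).le
  · simp [integral_undef hfi]

theorem lintegral_ofReal_mul_setIntegral_Ioc_le {k q K : ℝ → ℝ} {a b : ℝ} (hk : Continuous k)
    (hk0 : ∀ s, 0 ≤ k s) (hqm : Measurable q) (hq0 : ∀ u, 0 ≤ q u)
    (hq : IntegrableOn q (Ioc a b)) (hK : ∀ u ∈ Ioc a b, ∫ s in a..u, k s ≤ K u) :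
    ∫⁻ s in Ioc a b, ENNReal.ofReal (k s * ∫ u in Ioc s b, q u)
      ≤ ∫⁻ u in Ioc a b, ENNReal.ofReal (K u * q u) := by
  have hk_Ioo : ∀ u ∈ Ioc a b,
      ∫⁻ s in Ioo a u, ENNReal.ofReal (k s) = ENNReal.ofReal (∫ s in a..u, k s) := by
    intro u hu
    rw [intervalIntegral.integral_of_le hu.1.le,
      ofReal_integral_eq_lintegral_ofReal hk.integrableOn_Ioc (.of_forall fun s => hk0 s),
      setLIntegral_congr Ioo_ae_eq_Ioc]
  calc ∫⁻ s in Ioc a b, ENNReal.ofReal (k s * ∫ u in Ioc s b, q u)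
      = ∫⁻ s in Ioc a b, ENNReal.ofReal (k s) * ∫⁻ u in Ioc s b, ENNReal.ofReal (q u) := by
        refine setLIntegral_congr_fun measurableSet_Ioc fun s hs => ?_
        rw [ENNReal.ofReal_mul (hk0 s), ofReal_integral_eq_lintegral_ofReal
          (hq.mono_set (Ioc_subset_Ioc_left hs.1.le)) (.of_forall fun u => hq0 u)]
    _ = ∫⁻ u in Ioc a b, (∫⁻ s in Ioo a u, ENNReal.ofReal (k s)) * ENNReal.ofReal (q u) :=
        lintegral_Ioc_mul_lintegral_Ioc_eq hk.measurable.ennreal_ofReal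
          hqm.ennreal_ofReal a b
    _ ≤ ∫⁻ u in Ioc a b, ENNReal.ofReal (K u * q u) := by
        refine setLIntegral_mono' measurableSet_Ioc fun u hu => ?_
        have hK0 : 0 ≤ K u :=
          (intervalIntegral.integral_nonneg hu.1.le fun s _ => hk0 s).trans (hK u hu)
        rw [hk_Ioo u hu, ENNReal.ofReal_mul hK0]
        gcongr
        exact hK u hu

theorem integral_exp_mul_mul_of_hasDerivAt {A A' : ℝ → ℝ} (hA : ∀ x, HasDerivAt A (A' x) x)
    (hA' : Continuous A') {c : ℝ} (hc : c ≠ 0) (a b : ℝ) :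
    ∫ x in a..b, exp (c * A x) * A' x = (exp (c * A b) - exp (c * A a)) / c := by
  have hderiv : ∀ x, HasDerivAt (fun y => exp (c * A y) / c) (exp (c * A x) * A' x) x := by
    intro x
    refine ((((hA x).const_mul c).exp).div_const c).congr_deriv ?_
    field_simp
  have hcont : Continuous A := continuous_iff_continuousAt.2 fun x => (hA x).continuousAt
  rw [intervalIntegral.integral_eq_sub_of_hasDerivAt (fun x _ => hderiv x)
    ((by fun_prop : Continuous fun x => exp (c * A x) * A' x).intervalIntegrable a b)]
  ring

section Weighted

variable {α A f : ℝ → ℝ}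

theorem sq_intervalIntegral_le_exp_mul_setIntegral {c : ℝ} (hc : 0 < c) (hαc : Continuous α)
    (hα : ∀ u, α u ≠ 0) (hA : ∀ u, HasDerivAt A (α u ^ 2) u) (hf : Measurable f) {s T : ℝ}
    (hsT : s ≤ T) (hq : IntegrableOn (fun u => exp (c * A u) * f u ^ 2 / α u ^ 2) (Ioc s T)) :
    (∫ u in s..T, f u) ^ 2
      ≤ exp (-c * A s) / c * ∫ u in Ioc s T, exp (c * A u) * f u ^ 2 / α u ^ 2 := by
  have hAc : Continuous A := continuous_iff_continuousAt.2 fun x => (hA x).continuousAt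
  set e : ℝ → ℝ := fun u => exp (c * A u / 2)
  have he : Continuous e := by fun_prop
  have he0 : ∀ u, e u ≠ 0 := fun u => (exp_pos _).ne'
  have he_sq : ∀ u, e u ^ 2 = exp (c * A u) := fun u => by
    rw [← exp_nat_mul]; ring_nf
  have hp_sq : ∀ u, (α u / e u) ^ 2 = exp (-c * A u) * α u ^ 2 := fun u => by
    rw [div_pow, he_sq, neg_mul, exp_neg]; ring
  have hq_sq : ∀ u, (e u * f u / α u) ^ 2 = exp (c * A u) * f u ^ 2 / α u ^ 2 := fun u => by
    rw [div_pow, mul_pow, he_sq]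
  have hp : MemLp (fun u => α u / e u) 2 (volume.restrict (Ioc s T)) :=
    (memLp_two_iff_integrable_sq (hαc.div he he0).aestronglyMeasurable).2
      ((hαc.div he he0).pow 2).integrableOn_Ioc
  have hq' : MemLp (fun u => e u * f u / α u) 2 (volume.restrict (Ioc s T)) :=
    (memLp_two_iff_integrable_sq
      (he.measurable.mul hf |>.div hαc.measurable).aestronglyMeasurable).2
      (by simp_rw [Pi.div_apply, Pi.mul_apply, hq_sq]; exact hq)
  have hpq : ∫ u in s..T, f u = ∫ u in Ioc s T, α u / e u * (e u * f u / α u) := by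
    rw [intervalIntegral.integral_of_le hsT]
    refine setIntegral_congr_fun measurableSet_Ioc fun u _ => ?_
    field_simp [hα u, he0 u]
  have hp_int : ∫ u in Ioc s T, (α u / e u) ^ 2 ≤ exp (-c * A s) / c := by
    simp_rw [hp_sq, ← intervalIntegral.integral_of_le hsT,
      integral_exp_mul_mul_of_hasDerivAt hA (by fun_prop) (neg_ne_zero.2 hc.ne')]
    calc (exp (-c * A T) - exp (-c * A s)) / -c = (exp (-c * A s) - exp (-c * A T)) / c := by
          ring
      _ ≤ exp (-c * A s) / c := by gcongr; exact sub_le_self _ (exp_pos _).le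
  calc (∫ u in s..T, f u) ^ 2
      ≤ (∫ u in Ioc s T, (α u / e u) ^ 2) * ∫ u in Ioc s T, (e u * f u / α u) ^ 2 :=
        hpq ▸ sq_integral_mul_le_integral_sq_mul_integral_sq hp hq'
    _ ≤ _ := by
        simp_rw [hq_sq]
        exact mul_le_mul_of_nonneg_right hp_int
          (setIntegral_nonneg measurableSet_Ioc fun u _ => by positivity)

theorem intervalIntegral_exp_mul_sq_intervalIntegral_le {β : ℝ} (hβ : 0 < β)
    (hαc : Continuous α) (hα : ∀ u, α u ≠ 0) (hA : ∀ u, HasDerivAt A (α u ^ 2) u)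
    (hf : Measurable f) {a T : ℝ} (haT : a ≤ T)
    (hR : IntegrableOn (fun s => exp (β * A s) * f s ^ 2 / α s ^ 2) (Ioc a T)) :
    ∫ s in a..T, exp (β * A s) * (∫ u in s..T, f u) ^ 2 * (β * α s ^ 2)
      ≤ 4 / β * ∫ s in a..T, exp (β * A s) * f s ^ 2 / α s ^ 2 := by
  have hAc : Continuous A := continuous_iff_continuousAt.2 fun x => (hA x).continuousAt
  have hβ2 : 0 < β / 2 := half_pos hβ
  set q : ℝ → ℝ := fun u => exp (β / 2 * A u) * f u ^ 2 / α u ^ 2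
  set k : ℝ → ℝ := fun s => 2 * (exp (β / 2 * A s) * α s ^ 2)
  have hexp : ∀ s, exp (β * A s) = exp (β / 2 * A s) * exp (β / 2 * A s) := fun s => by
    rw [← exp_add]; ring_nf
  have hq : IntegrableOn q (Ioc a T) := by
    refine (hR.continuousOn_mul_of_subset (g := fun u => exp (-(β / 2) * A u)) (by fun_prop)
      isCompact_Icc measurableSet_Ioc Ioc_subset_Icc_self).congr_fun (fun u _ => ?_)
      measurableSet_Ioc
    simp only [q, hexp, neg_mul, exp_neg]
    field_simp
  have hL : ∀ s ∈ Ioc a T, exp (β * A s) * (∫ u in s..T, f u) ^ 2 * (β * α s ^ 2)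
      ≤ k s * ∫ u in Ioc s T, q u := by
    intro s hs
    have hcs := sq_intervalIntegral_le_exp_mul_setIntegral hβ2 hαc hα hA hf hs.2
      (hq.mono_set (Ioc_subset_Ioc_left hs.1.le))
    calc exp (β * A s) * (∫ u in s..T, f u) ^ 2 * (β * α s ^ 2)
        ≤ exp (β * A s) * (exp (-(β / 2) * A s) / (β / 2) * ∫ u in Ioc s T, q u)
          * (β * α s ^ 2) := by gcongr
      _ = k s * ∫ u in Ioc s T, q u := by
        simp only [k, hexp, neg_mul, exp_neg]
        field_simp
  have hK : ∀ u ∈ Ioc a T, ∫ s in a..u, k s ≤ 4 / β * exp (β / 2 * A u) := by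
    intro u hu
    rw [intervalIntegral.integral_const_mul,
      integral_exp_mul_mul_of_hasDerivAt hA (by fun_prop) hβ2.ne']
    have := exp_pos (β / 2 * A a)
    calc 2 * ((exp (β / 2 * A u) - exp (β / 2 * A a)) / (β / 2))
        ≤ 2 * (exp (β / 2 * A u) / (β / 2)) := by gcongr; linarith
      _ = 4 / β * exp (β / 2 * A u) := by field_simp; ring
  have hlint := lintegral_ofReal_mul_setIntegral_Ioc_le (by fun_prop)
    (fun s => by positivity) (by fun_prop) (fun u => by positivity) hq hK
  rw [intervalIntegral.integral_of_le haT, intervalIntegral.integral_of_le haT,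
    ← integral_const_mul, ← ENNReal.ofReal_le_ofReal_iff
      (integral_nonneg fun s => by positivity)]
  calc ENNReal.ofReal (∫ s in Ioc a T, exp (β * A s) * (∫ u in s..T, f u) ^ 2 * (β * α s ^ 2))
      ≤ ∫⁻ s in Ioc a T, ENNReal.ofReal (k s * ∫ u in Ioc s T, q u) :=
        (ofReal_integral_le_lintegral_ofReal (.of_forall fun s => by positivity)).trans
          (setLIntegral_mono' measurableSet_Ioc fun s hs => ENNReal.ofReal_le_ofReal (hL s hs))
    _ ≤ ∫⁻ u in Ioc a T, ENNReal.ofReal (4 / β * exp (β / 2 * A u) * q u) := hlint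
    _ = _ := by
        rw [ofReal_integral_eq_lintegral_ofReal (hR.const_mul _)
          (.of_forall fun s => by positivity)]
        congr with u
        simp only [q, hexp]
        ring_nf

end Weighted

section Triangle

variable {F : ℝ × ℝ → ℝ} {a b : ℝ}

theorem measurableSet_triangle (a b : ℝ) :
    MeasurableSet {q : ℝ × ℝ | a ≤ q.1 ∧ q.1 ≤ q.2 ∧ q.2 ≤ b} :=
  (measurableSet_le measurable_const measurable_fst).inter
    ((measurableSet_le measurable_fst measurable_snd).inter
      (measurableSet_le measurable_snd measurable_const))

theorem indicator_triangle_slice {t : ℝ} (ht : a ≤ t) :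
    (fun s => {q : ℝ × ℝ | a ≤ q.1 ∧ q.1 ≤ q.2 ∧ q.2 ≤ b}.indicator F (t, s))
      = (Icc t b).indicator fun s => F (t, s) := by
  ext s
  simp [indicator_apply, ht]

theorem ae_integrableOn_triangle_slice
    (hF : IntegrableOn F {q : ℝ × ℝ | a ≤ q.1 ∧ q.1 ≤ q.2 ∧ q.2 ≤ b}) :
    ∀ᵐ t, a ≤ t → IntegrableOn (fun s => F (t, s)) (Icc t b) := by
  have h := (integrable_indicator_iff (measurableSet_triangle a b)).2 hF
  rw [Measure.volume_eq_prod] at h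
  filter_upwards [h.prod_right_ae] with t ht hat
  rwa [indicator_triangle_slice hat, integrable_indicator_iff measurableSet_Icc] at ht

theorem integrableOn_intervalIntegral_triangle_slice
    (hF : IntegrableOn F {q : ℝ × ℝ | a ≤ q.1 ∧ q.1 ≤ q.2 ∧ q.2 ≤ b}) :
    IntegrableOn (fun t => ∫ s in t..b, F (t, s)) (Ioc a b) := by
  have h := (integrable_indicator_iff (measurableSet_triangle a b)).2 hF
  rw [Measure.volume_eq_prod] at h
  refine h.integral_prod_left.integrableOn.congr_fun (fun t ht => ?_) measurableSet_Ioc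
  beta_reduce
  rw [indicator_triangle_slice ht.1.le, integral_indicator measurableSet_Icc,
    integral_Icc_eq_integral_Ioc, intervalIntegral.integral_of_le ht.2]

end Triangle

theorem stmt9_general (T δ β : ℝ) (hT : 0 ≤ T) (hδ : 0 < δ) (hβ : 0 < β)
    (α : ℝ → ℝ) (hαc : Continuous α) (hαlb : ∀ s, Real.sqrt δ ≤ α s)
    (A : ℝ → ℝ) (hA : ∀ t, A t = ∫ u in (0:ℝ)..t, (α u) ^ 2)
    (g : ℝ → ℝ → ℝ) (hg : Measurable (Function.uncurry g))
    (hgi : IntegrableOn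
      (fun q : ℝ × ℝ => Real.exp (β * A q.2) * (g q.1 q.2) ^ 2 / (α q.2) ^ 2)
      {q : ℝ × ℝ | 0 ≤ q.1 ∧ q.1 ≤ q.2 ∧ q.2 ≤ T}) :
    (∫ t in (0:ℝ)..T, ∫ s in t..T, Real.exp (β * A s) * (∫ u in s..T, g t u) ^ 2 * (β * (α s) ^ 2))
      ≤ (4 / β) * ∫ t in (0:ℝ)..T, ∫ s in t..T, Real.exp (β * A s) * (g t s) ^ 2 / (α s) ^ 2 := by
  have hα : ∀ s, α s ≠ 0 := fun s => ((Real.sqrt_pos.2 hδ).trans_le (hαlb s)).ne'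
  have hA' : ∀ s, HasDerivAt A (α s ^ 2) s := fun s => by
    rw [funext hA]
    exact ((hαc.pow 2).integral_hasStrictDerivAt 0 s).hasDerivAt
  rw [intervalIntegral.integral_of_le hT, intervalIntegral.integral_of_le hT,
    ← integral_const_mul]
  refine integral_mono_of_nonneg ?_
    ((integrableOn_intervalIntegral_triangle_slice hgi).const_mul _) ?_
  · filter_upwards [ae_restrict_mem measurableSet_Ioc] with t ht
    exact intervalIntegral.integral_nonneg ht.2 fun s _ => by positivity
  · filter_upwards [ae_restrict_mem measurableSet_Ioc,
      ae_restrict_of_ae (ae_integrableOn_triangle_slice hgi)] with t ht hslice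
    exact intervalIntegral_exp_mul_sq_intervalIntegral_le hβ hαc hα hA' hg.of_uncurry_left ht.2
      ((hslice ht.1.le).mono_set Ioc_subset_Icc_self)

theorem stmt9 (T δ β : ℝ) (hT : 0 ≤ T) (hδ : 0 < δ) (hβ : 0 < β)
    (α : ℝ → ℝ) (hαc : Continuous α) (hαlb : ∀ s, Real.sqrt δ ≤ α s)
    (A : ℝ → ℝ) (hA : ∀ t, A t = ∫ u in (0:ℝ)..t, (α u) ^ 2)
    (g : ℝ → ℝ → ℝ) (hg : Measurable (Function.uncurry g))
    (hgi : IntegrableOn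
      (fun q : ℝ × ℝ => Real.exp (β * A q.2) * (g q.1 q.2) ^ 2 / (α q.2) ^ 2)
      {q : ℝ × ℝ | 0 ≤ q.1 ∧ q.1 ≤ q.2 ∧ q.2 ≤ T})
    (hout1 : ∀ t ∈ Set.Icc (0:ℝ) T, IntegrableOn
      (fun s => Real.exp (β * A s) * (∫ u in s..T, g t u) ^ 2 * (β * (α s) ^ 2)) (Set.Icc t T))
    (hout2 : IntegrableOn
      (fun t => ∫ s in t..T, Real.exp (β * A s) * (∫ u in s..T, g t u) ^ 2 * (β * (α s) ^ 2))
      (Set.Icc 0 T))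
    (hout3 : IntegrableOn
      (fun t => ∫ s in t..T, Real.exp (β * A s) * (g t s) ^ 2 / (α s) ^ 2) (Set.Icc 0 T)) :
    (∫ t in (0:ℝ)..T, ∫ s in t..T, Real.exp (β * A s) * (∫ u in s..T, g t u) ^ 2 * (β * (α s) ^ 2))
      ≤ (4 / β) * ∫ t in (0:ℝ)..T, ∫ s in t..T, Real.exp (β * A s) * (g t s) ^ 2 / (α s) ^ 2 :=
  stmt9_general T δ β hT hδ hβ α hαc hαlb A hA g hg hgi
end

section
/- Define f : ℝ → [0,∞) by f(x) = 0 for x = 0, f(x) = |x|·(ln(1 + |x|^{-1}))^{1/2} for 0 < |x| < δ, and f(x) = δ·(ln(1 + δ^{-1}))^{1/2} for |x| ≥ δ, where δ ∈ (0,1). Define ρ : [0,∞) → [0,∞) by ρ(0)=0, ρ(x) = x ln(1 + x^{-1}) for 0 < x < 1, ρ(x) = ln 2 for x ≥ 1. Then for all y, ȳ ∈ ℝ: |f(y) - f(ȳ)| ≤ (ρ(|y - ȳ|²))^{1/2}. -/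
noncomputable def rho (x : ℝ) : ℝ :=
  if x ≤ 0 then 0 else if x < 1 then x * Real.log (1 + 1 / x) else Real.log 2

noncomputable def f (δ : ℝ) (x : ℝ) : ℝ :=
  if x = 0 then 0
  else if |x| < δ then |x| * Real.sqrt (Real.log (1 + 1 / |x|))
  else δ * Real.sqrt (Real.log (1 + 1 / δ))

/-!
Write `g t = t √(log (1 + 1/t))`, so that `f δ x = g (min |x| δ)`. Since `log (1 + 1/t)` decreases,
`g` is subadditive, and `t ↦ t log (1 + 1/t)` (hence `g`) increases; therefore
`|g a - g b| ≤ g |a - b|`. Finally `g u ≤ √(ρ (u²))` for `u < 1` because `u² ≤ u`, and `ρ` is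
monotone, while `x ↦ min |x| δ` is 1-Lipschitz.
-/

open Real Set

lemma log_one_add_one_div_nonneg {x : ℝ} (hx : 0 ≤ x) : 0 ≤ log (1 + 1 / x) :=
  log_nonneg (by simpa using one_div_nonneg.2 hx)

lemma log_one_add_one_div_antitoneOn : AntitoneOn (fun x : ℝ ↦ log (1 + 1 / x)) (Ioi 0) :=
  fun p hp q _ hpq ↦ by
    have hq : 0 < q := hp.out.trans_le hpq
    exact log_le_log (by positivity) (by gcongr)

lemma inv_add_one_le_log_one_add_one_div {q : ℝ} (hq : 0 < q) :
    1 / (q + 1) ≤ log (1 + 1 / q) := by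
  have h := one_sub_inv_le_log_of_pos (show 0 < 1 + 1 / q by positivity)
  have he : 1 - (1 + 1 / q)⁻¹ = 1 / (q + 1) := by field_simp; ring
  rwa [he] at h

lemma log_one_add_one_div_sub_le {p q : ℝ} (hp : 0 < p) (hpq : p ≤ q) :
    log (1 + 1 / p) - log (1 + 1 / q) ≤ (q - p) / ((q + 1) * p) := by
  have hq : 0 < q := hp.trans_le hpq
  have h := log_le_sub_one_of_pos (show 0 < (1 + 1 / p) / (1 + 1 / q) by positivity)
  have he : (1 + 1 / p) / (1 + 1 / q) - 1 = (q - p) / ((q + 1) * p) := by field_simp; ring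
  rwa [log_div (by positivity) (by positivity), he] at h

noncomputable def mulLogOneAddOneDiv (x : ℝ) : ℝ := x * log (1 + 1 / x)

lemma mulLogOneAddOneDiv_nonneg {x : ℝ} (hx : 0 ≤ x) : 0 ≤ mulLogOneAddOneDiv x :=
  mul_nonneg hx (log_one_add_one_div_nonneg hx)

lemma mulLogOneAddOneDiv_monotoneOn : MonotoneOn mulLogOneAddOneDiv (Ici 0) := by
  intro p hp q hq hpq
  rcases (mem_Ici.1 hp).eq_or_lt with rfl | hp
  · simpa [mulLogOneAddOneDiv] using mulLogOneAddOneDiv_nonneg hq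
  have hq : 0 < q := hp.trans_le hpq
  -- `ψ q - ψ p ≥ (q - p) (log (1 + 1/q) - 1/(q + 1)) ≥ 0` for `ψ x = x log (1 + 1/x)`
  have hdiff : p * (log (1 + 1 / p) - log (1 + 1 / q)) ≤ (q - p) / (q + 1) := by
    calc p * (log (1 + 1 / p) - log (1 + 1 / q)) ≤ p * ((q - p) / ((q + 1) * p)) :=
          mul_le_mul_of_nonneg_left (log_one_add_one_div_sub_le hp hpq) hp.le
      _ = (q - p) / (q + 1) := by field_simp
  have hlow : (q - p) / (q + 1) ≤ (q - p) * log (1 + 1 / q) := by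
    rw [div_eq_mul_one_div]
    exact mul_le_mul_of_nonneg_left (inv_add_one_le_log_one_add_one_div hq) (by linarith)
  unfold mulLogOneAddOneDiv
  linarith

lemma rho_eq_mulLogOneAddOneDiv_min {x : ℝ} (hx : 0 ≤ x) :
    rho x = mulLogOneAddOneDiv (min x 1) := by
  unfold rho mulLogOneAddOneDiv
  split_ifs with h0 h1
  · simp [le_antisymm h0 hx]
  · rw [min_eq_left h1.le]
  · rw [min_eq_right (not_lt.1 h1)]; norm_num

lemma rho_monotoneOn : MonotoneOn rho (Ici 0) := by
  intro p hp q hq hpq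
  rw [rho_eq_mulLogOneAddOneDiv_min hp, rho_eq_mulLogOneAddOneDiv_min hq]
  exact mulLogOneAddOneDiv_monotoneOn (mem_Ici.2 (le_min hp zero_le_one))
    (mem_Ici.2 (le_min hq zero_le_one))
    (min_le_min_right 1 hpq)

noncomputable def mulSqrtLogOneAddOneDiv (t : ℝ) : ℝ := t * √(log (1 + 1 / t))

lemma mulSqrtLogOneAddOneDiv_eq_sqrt {t : ℝ} (ht : 0 ≤ t) :
    mulSqrtLogOneAddOneDiv t = √(t * mulLogOneAddOneDiv t) := by
  rw [mulSqrtLogOneAddOneDiv, mulLogOneAddOneDiv, ← mul_assoc, sqrt_mul (mul_self_nonneg t),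
    sqrt_mul_self ht]

lemma mulSqrtLogOneAddOneDiv_monotoneOn : MonotoneOn mulSqrtLogOneAddOneDiv (Ici 0) := by
  intro p hp q hq hpq
  rw [mulSqrtLogOneAddOneDiv_eq_sqrt hp, mulSqrtLogOneAddOneDiv_eq_sqrt hq]
  exact sqrt_le_sqrt (mul_le_mul hpq (mulLogOneAddOneDiv_monotoneOn hp hq hpq)
    (mulLogOneAddOneDiv_nonneg hp) (mem_Ici.1 hq))

lemma mulSqrtLogOneAddOneDiv_add_le {b u : ℝ} (hb : 0 ≤ b) (hu : 0 ≤ u) :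
    mulSqrtLogOneAddOneDiv (b + u) ≤ mulSqrtLogOneAddOneDiv b + mulSqrtLogOneAddOneDiv u := by
  have hle : ∀ s t : ℝ, 0 ≤ s → s ≤ t → s * √(log (1 + 1 / t)) ≤ s * √(log (1 + 1 / s)) := by
    intro s t hs hst
    rcases hs.eq_or_lt with rfl | hs
    · simp
    · exact mul_le_mul_of_nonneg_left
        (sqrt_le_sqrt (log_one_add_one_div_antitoneOn hs (hs.trans_le hst) hst)) hs.le
  unfold mulSqrtLogOneAddOneDiv
  rw [add_mul]
  exact add_le_add (hle b _ hb (by linarith)) (hle u _ hu (by linarith))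

lemma abs_mulSqrtLogOneAddOneDiv_sub_le {a b : ℝ} (ha : 0 ≤ a) (hb : 0 ≤ b) :
    |mulSqrtLogOneAddOneDiv a - mulSqrtLogOneAddOneDiv b| ≤ mulSqrtLogOneAddOneDiv |a - b| := by
  wlog hba : b ≤ a generalizing a b
  · rw [abs_sub_comm, abs_sub_comm a]
    exact this hb ha (le_of_not_ge hba)
  have hmono := mulSqrtLogOneAddOneDiv_monotoneOn hb ha hba
  have hsub := mulSqrtLogOneAddOneDiv_add_le hb (sub_nonneg.2 hba)
  rw [add_sub_cancel] at hsub
  rw [abs_of_nonneg (sub_nonneg.2 hmono), abs_of_nonneg (sub_nonneg.2 hba)]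
  linarith

lemma mulSqrtLogOneAddOneDiv_le_sqrt_rho_sq {u : ℝ} (hu : 0 ≤ u) (hu1 : u < 1) :
    mulSqrtLogOneAddOneDiv u ≤ √(rho (u ^ 2)) := by
  rcases hu.eq_or_lt with rfl | hu
  · simp [mulSqrtLogOneAddOneDiv]
  have hsq : u ^ 2 ≤ u := by nlinarith
  rw [mulSqrtLogOneAddOneDiv_eq_sqrt hu.le, rho, if_neg (not_le.2 (by positivity)), if_pos (by linarith)]
  refine sqrt_le_sqrt ?_
  calc u * mulLogOneAddOneDiv u = u ^ 2 * log (1 + 1 / u) := by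
        rw [mulLogOneAddOneDiv]; ring
    _ ≤ u ^ 2 * log (1 + 1 / u ^ 2) := mul_le_mul_of_nonneg_left
        (log_one_add_one_div_antitoneOn (show 0 < u ^ 2 by positivity) hu hsq) (sq_nonneg u)

lemma f_eq_mulSqrtLogOneAddOneDiv_min {δ : ℝ} (hδ : 0 ≤ δ) (x : ℝ) :
    f δ x = mulSqrtLogOneAddOneDiv (min |x| δ) := by
  unfold f mulSqrtLogOneAddOneDiv
  split_ifs with h0 hδx
  · simp [h0, hδ]
  · rw [min_eq_left hδx.le]
  · rw [min_eq_right (not_lt.1 hδx)]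

theorem stmt11 (δ : ℝ) (hδ0 : 0 < δ) (hδ1 : δ < 1) :
    ∀ y ybar : ℝ, |f δ y - f δ ybar| ≤ Real.sqrt (rho ((y - ybar) ^ 2)) := by
  intro y ybar
  set a := min |y| δ
  set b := min |ybar| δ
  have ha : 0 ≤ a := le_min (abs_nonneg y) hδ0.le
  have hb : 0 ≤ b := le_min (abs_nonneg ybar) hδ0.le
  have hab : |a - b| ≤ |y - ybar| := by
    simpa using (abs_min_sub_min_le_max |y| δ |ybar| δ).trans
      (max_le_max_right |δ - δ| (abs_abs_sub_abs_le_abs_sub y ybar))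
  have hab1 : |a - b| < 1 := by
    rw [abs_sub_lt_iff]; constructor <;> linarith [min_le_right |y| δ, min_le_right |ybar| δ]
  rw [f_eq_mulSqrtLogOneAddOneDiv_min hδ0.le, f_eq_mulSqrtLogOneAddOneDiv_min hδ0.le]
  calc _ ≤ mulSqrtLogOneAddOneDiv |a - b| := abs_mulSqrtLogOneAddOneDiv_sub_le ha hb
    _ ≤ √(rho (|a - b| ^ 2)) := mulSqrtLogOneAddOneDiv_le_sqrt_rho_sq (abs_nonneg _) hab1
    _ ≤ √(rho ((y - ybar) ^ 2)) := sqrt_le_sqrt <| rho_monotoneOn (sq_nonneg |a - b|) (sq_nonneg (y - ybar))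
        (by rw [← sq_abs (y - ybar)]; exact pow_le_pow_left₀ (abs_nonneg _) hab 2)
end
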